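/- Let S be a finite set of axis-aligned squares and let C₁ be a storing cell of S at level ℓ. The number of dyadic cells C₂ at level ℓ with C₂ ∈ 𝒫(π(C₁)) is at most 121. -/
import Mathlib


open Set

/-- A dyadic cell at level `level` (side length `2^level`) with lower-left corner
`(a·2^level, b·2^level)`. -/
structure DyadicCell where
  level : ℤ
  a : ℤ
  b : ℤ
deriving DecidableEq

/-- The side length of a dyadic cell. -/
noncomputable def DyadicCell.side (C : DyadicCell) : ℝ := 2 ^ C.level

/-- The dyadic cell as a subset of the plane. -/
noncomputable def DyadicCell.toSet (C : DyadicCell) : Set (ℝ × ℝ) :=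
  Set.Icc ((C.a : ℝ) * 2 ^ C.level) ((C.a + 1 : ℝ) * 2 ^ C.level) ×ˢ
    Set.Icc ((C.b : ℝ) * 2 ^ C.level) ((C.b + 1 : ℝ) * 2 ^ C.level)

/-- `5C`: the square obtained by scaling the cell `C` by a factor `5` about its center. -/
noncomputable def DyadicCell.scale5 (C : DyadicCell) : Set (ℝ × ℝ) :=
  Set.Icc ((C.a - 2 : ℝ) * 2 ^ C.level) ((C.a + 3 : ℝ) * 2 ^ C.level) ×ˢ
    Set.Icc ((C.b - 2 : ℝ) * 2 ^ C.level) ((C.b + 3 : ℝ) * 2 ^ C.level)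

/-- An axis-aligned square `[x, x+s] × [y, y+s]` of side length `s > 0`. -/
structure Square where
  x : ℝ
  y : ℝ
  s : ℝ
  s_pos : 0 < s

/-- The square as a subset of the plane. -/
noncomputable def Square.toSet (σ : Square) : Set (ℝ × ℝ) :=
  Set.Icc σ.x (σ.x + σ.s) ×ˢ Set.Icc σ.y (σ.y + σ.s)

/-- The center of a square. -/
noncomputable def Square.center (σ : Square) : ℝ × ℝ := (σ.x + σ.s / 2, σ.y + σ.s / 2)

/-- `C` is a storing cell of `σ`: a dyadic cell of maximal side length among those that
contain the center of `σ` and are contained in `σ`. -/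
def IsStoringCell (σ : Square) (C : DyadicCell) : Prop :=
  σ.center ∈ C.toSet ∧ C.toSet ⊆ σ.toSet ∧
    ∀ D : DyadicCell, σ.center ∈ D.toSet → D.toSet ⊆ σ.toSet → D.side ≤ C.side

/-- `C` is a storing cell of the set `S` (with fixed storing-cell choice `c`):
some square of `S` is stored in `C`. -/
def IsStoringCellOf (S : Finset Square) (c : Square → DyadicCell) (C : DyadicCell) : Prop :=
  ∃ σ ∈ S, c σ = C

/-- `π(C)`: the squares of `S` stored in `C`. -/
def piCell (S : Finset Square) (c : Square → DyadicCell) (C : DyadicCell) : Set Square :=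
  {σ | σ ∈ S ∧ c σ = C}

/-- `𝒞(σ)`: the dyadic cells `D ⊆ σ` containing at least one storing cell of `S`,
maximal with both properties. -/
def calC (S : Finset Square) (c : Square → DyadicCell) (σ : Square) : Set DyadicCell :=
  {D | D.toSet ⊆ σ.toSet ∧ (∃ E, IsStoringCellOf S c E ∧ E.toSet ⊆ D.toSet) ∧
    ¬ ∃ D' : DyadicCell, D.toSet ⊂ D'.toSet ∧ D'.toSet ⊆ σ.toSet ∧
      ∃ E, IsStoringCellOf S c E ∧ E.toSet ⊆ D'.toSet}

/-- `𝒫(γ)`: the storing cells `D` of `S` with `side(D) ≤ side(γ)` such that `5D`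
intersects the boundary of `γ`. -/
def calP (S : Finset Square) (c : Square → DyadicCell) (γ : Square) : Set DyadicCell :=
  {D | IsStoringCellOf S c D ∧ D.side ≤ γ.s ∧ (D.scale5 ∩ frontier γ.toSet).Nonempty}


lemma floor_cell_fact (x s : ℝ) (k : ℤ) (hs : 2 * (2:ℝ) ^ k ≤ s) :
    (⌊(x + s / 2) / (2:ℝ) ^ k⌋ : ℝ) * 2 ^ k ≤ x + s / 2 ∧
    x + s / 2 ≤ ((⌊(x + s / 2) / (2:ℝ) ^ k⌋ : ℝ) + 1) * 2 ^ k ∧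
    x ≤ (⌊(x + s / 2) / (2:ℝ) ^ k⌋ : ℝ) * 2 ^ k ∧
    ((⌊(x + s / 2) / (2:ℝ) ^ k⌋ : ℝ) + 1) * 2 ^ k ≤ x + s := by
  have hT : (0:ℝ) < 2 ^ k := by positivity
  have h1 : (⌊(x + s / 2) / (2:ℝ) ^ k⌋ : ℝ) * 2 ^ k ≤ x + s / 2 :=
    (le_div_iff₀ hT).mp (Int.floor_le _)
  have h2 : x + s / 2 < ((⌊(x + s / 2) / (2:ℝ) ^ k⌋ : ℝ) + 1) * 2 ^ k :=
    (div_lt_iff₀ hT).mp (Int.lt_floor_add_one _)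
  have hexp : ((⌊(x + s / 2) / (2:ℝ) ^ k⌋ : ℝ) + 1) * 2 ^ k
      = (⌊(x + s / 2) / (2:ℝ) ^ k⌋ : ℝ) * 2 ^ k + 2 ^ k := by ring
  exact ⟨h1, le_of_lt h2, by linarith, by linarith⟩

lemma square_side_lt (γ : Square) (C : DyadicCell) (h : IsStoringCell γ C) :
    γ.s < 4 * 2 ^ C.level := by
  by_contra h4
  push_neg at h4
  set k := C.level + 1 with hk
  have hkpow : (2:ℝ) ^ k = 2 ^ C.level * 2 := zpow_add_one₀ two_ne_zero _
  have hs : 2 * (2:ℝ) ^ k ≤ γ.s := by rw [hkpow]; linarith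
  obtain ⟨hx1, hx2, hx3, hx4⟩ := floor_cell_fact γ.x γ.s k hs
  obtain ⟨hy1, hy2, hy3, hy4⟩ := floor_cell_fact γ.y γ.s k hs
  set D : DyadicCell := ⟨k, ⌊(γ.x + γ.s / 2) / (2:ℝ) ^ k⌋, ⌊(γ.y + γ.s / 2) / (2:ℝ) ^ k⌋⟩
  have hmem : γ.center ∈ D.toSet := by
    simp only [DyadicCell.toSet, Square.center, Set.mem_prod, Set.mem_Icc]
    push_cast
    exact ⟨⟨hx1, hx2⟩, hy1, hy2⟩
  have hsub : D.toSet ⊆ γ.toSet := by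
    apply Set.prod_mono <;> apply Set.Icc_subset_Icc <;> push_cast <;> assumption
  have := h.2.2 D hmem hsub
  simp only [DyadicCell.side, D, hk] at this
  have h5 : (2:ℝ) ^ C.level < 2 ^ (C.level + 1) :=
    zpow_lt_zpow_right₀ (by norm_num) (lt_add_one C.level)
  linarith

theorem statement16 (S : Finset Square) (c : Square → DyadicCell)
    (hc : ∀ σ ∈ S, IsStoringCell σ (c σ))
    (C₁ : DyadicCell) (h₁ : IsStoringCellOf S c C₁) :
    {C₂ : DyadicCell | C₂.level = C₁.level ∧
      ∃ γ ∈ piCell S c C₁, C₂ ∈ calP S c γ}.encard ≤ 121 := by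
  have hT : (0:ℝ) < 2 ^ C₁.level := by positivity
  have hsub : {C₂ : DyadicCell | C₂.level = C₁.level ∧
      ∃ γ ∈ piCell S c C₁, C₂ ∈ calP S c γ} ⊆
      ((Finset.Icc (C₁.a - 5) (C₁.a + 5) ×ˢ Finset.Icc (C₁.b - 5) (C₁.b + 5)).image
        (fun p : ℤ × ℤ => (⟨C₁.level, p.1, p.2⟩ : DyadicCell)) : Finset DyadicCell) := by
    rintro ⟨l₂, a₂, b₂⟩ ⟨hl, γ, ⟨hγS, hγc⟩, _, _, p, hp5, hpf⟩
    simp only at hl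
    subst hl
    have hst : IsStoringCell γ C₁ := hγc ▸ hc γ hγS
    have hslt : γ.s < 4 * 2 ^ C₁.level := square_side_lt γ C₁ hst
    have hcen := hst.1
    simp only [Square.center, DyadicCell.toSet, Set.mem_prod, Set.mem_Icc] at hcen
    obtain ⟨⟨hcx1, hcx2⟩, hcy1, hcy2⟩ := hcen
    have hpγ : p ∈ γ.toSet := by
      have : frontier γ.toSet ⊆ γ.toSet :=
        (IsClosed.prod isClosed_Icc isClosed_Icc).frontier_subset
      exact this hpf
    simp only [Square.toSet, Set.mem_prod, Set.mem_Icc] at hpγ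
    obtain ⟨⟨hpx1, hpx2⟩, hpy1, hpy2⟩ := hpγ
    simp only [DyadicCell.scale5, Set.mem_prod, Set.mem_Icc] at hp5
    obtain ⟨⟨hqx1, hqx2⟩, hqy1, hqy2⟩ := hp5
    push_cast at hcx2 hcy2 hqx1 hqx2 hqy1 hqy2 ⊢
    simp only [Finset.coe_image, Set.mem_image, Finset.mem_coe, Finset.mem_product,
      Finset.mem_Icc]
    refine ⟨(a₂, b₂), ⟨⟨?_, ?_⟩, ?_, ?_⟩, rfl⟩
    all_goals
      have key : ∀ u v : ℤ, (u : ℝ) < v + 1 → u ≤ v := by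
        intro u v huv
        exact_mod_cast Int.lt_add_one_iff.mp (by exact_mod_cast huv)
    · have : ((C₁.a : ℝ) - 5) < a₂ + 1 := by nlinarith
      have := key (C₁.a - 5) a₂ (by push_cast; linarith)
      omega
    · have := key a₂ (C₁.a + 5) (by push_cast; nlinarith)
      omega
    · have := key (C₁.b - 5) b₂ (by push_cast; nlinarith)
      omega
    · have := key b₂ (C₁.b + 5) (by push_cast; nlinarith)
      omega
  calc _ ≤ _ := Set.encard_mono hsub
  _ ≤ (121 : ℕ∞) := by
      rw [Set.encard_coe_eq_coe_finsetCard]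
      have h1 : ((Finset.Icc (C₁.a - 5) (C₁.a + 5) ×ˢ Finset.Icc (C₁.b - 5) (C₁.b + 5)).image
          (fun p : ℤ × ℤ => (⟨C₁.level, p.1, p.2⟩ : DyadicCell))).card ≤ 121 := by
        refine le_trans Finset.card_image_le ?_
        rw [Finset.card_product, Int.card_Icc, Int.card_Icc,
          (by ring : C₁.a + 5 + 1 - (C₁.a - 5) = 11), (by ring : C₁.b + 5 + 1 - (C₁.b - 5) = 11)]
        rfl
      exact_mod_cast h1
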